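/- Let a₁, a₂ > 0 with a₁ + a₂ < π/2, and let S_a(x,y) = (cos 2a)/(2 sin 2a)(x² + y²) − xy/(sin 2a). Then for all q₁, q₃ ∈ ℝ, the function g(q₂) = S_{a₁}(q₁, q₂) + S_{a₂}(q₂, q₃) has a unique critical point q₂* ∈ ℝ, and g(q₂*) = S_{a₁+a₂}(q₁, q₃). -/

import Mathlib

/-!
The function `g` is a quadratic polynomial in `q₂` whose derivative, multiplied by
`sin 2a₁ * sin 2a₂`, equals `q₂ * sin (2a₁ + 2a₂) - (q₁ * sin 2a₂ + q₃ * sin 2a₁)` by the addition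
formula for `sin`. Since `0 < 2a₁ + 2a₂ < π`, the unique critical point is
`q₂* = (q₁ * sin 2a₂ + q₃ * sin 2a₁) / sin (2a₁ + 2a₂)`, and substituting it into `g` gives
`S_{a₁+a₂}(q₁, q₃)` by the addition formulas for `sin`, `cos` and `sin² + cos² = 1`.
-/

open Real

/-- The generating function `S_a` of the rotation of `ℝ²` by the angle `2a`. -/
noncomputable def rotGenFun (a x y : ℝ) : ℝ :=
  cos (2 * a) / (2 * sin (2 * a)) * (x ^ 2 + y ^ 2) - x * y / sin (2 * a)

lemma rotGenFun_comm (a x y : ℝ) : rotGenFun a x y = rotGenFun a y x := by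
  unfold rotGenFun; ring

lemma hasDerivAt_rotGenFun_right (a x y : ℝ) :
    HasDerivAt (rotGenFun a x) (cos (2 * a) / sin (2 * a) * y - x / sin (2 * a)) y := by
  have hsq := ((hasDerivAt_pow 2 y).const_add (x ^ 2)).const_mul (cos (2 * a) / (2 * sin (2 * a)))
  have hlin := ((hasDerivAt_id' y).const_mul x).div_const (sin (2 * a))
  exact (hsq.sub hlin).congr_deriv (by ring)

lemma hasDerivAt_rotGenFun_left (a x y : ℝ) :
    HasDerivAt (fun x => rotGenFun a x y) (cos (2 * a) / sin (2 * a) * x - y / sin (2 * a)) x := by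
  simpa only [rotGenFun_comm a _ y] using hasDerivAt_rotGenFun_right a y x

lemma deriv_rotGenFun_add_eq_zero_iff {a₁ a₂ : ℝ} (hs₁ : sin (2 * a₁) ≠ 0)
    (hs₂ : sin (2 * a₂) ≠ 0) (q₁ q₃ c : ℝ) :
    deriv (fun q₂ => rotGenFun a₁ q₁ q₂ + rotGenFun a₂ q₂ q₃) c = 0 ↔
      c * sin (2 * (a₁ + a₂)) = q₁ * sin (2 * a₂) + q₃ * sin (2 * a₁) := by
  have hd : HasDerivAt (fun q₂ => rotGenFun a₁ q₁ q₂ + rotGenFun a₂ q₂ q₃) _ c :=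
    (hasDerivAt_rotGenFun_right a₁ q₁ c).add (hasDerivAt_rotGenFun_left a₂ c q₃)
  have hscaled : deriv (fun q₂ => rotGenFun a₁ q₁ q₂ + rotGenFun a₂ q₂ q₃) c *
      (sin (2 * a₁) * sin (2 * a₂)) =
        c * sin (2 * (a₁ + a₂)) - (q₁ * sin (2 * a₂) + q₃ * sin (2 * a₁)) := by
    rw [hd.deriv, mul_add 2 a₁, sin_add]
    field_simp
    ring
  rw [← sub_eq_zero (a := c * _), ← hscaled, mul_eq_zero_iff_right (mul_ne_zero hs₁ hs₂)]

lemma rotGenFun_add_of_critical {a₁ a₂ q₁ q₃ c : ℝ} (hs₁ : sin (2 * a₁) ≠ 0)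
    (hs₂ : sin (2 * a₂) ≠ 0) (hs : sin (2 * (a₁ + a₂)) ≠ 0)
    (hc : c * sin (2 * (a₁ + a₂)) = q₁ * sin (2 * a₂) + q₃ * sin (2 * a₁)) :
    rotGenFun a₁ q₁ c + rotGenFun a₂ c q₃ = rotGenFun (a₁ + a₂) q₁ q₃ := by
  unfold rotGenFun
  rw [mul_add, sin_add] at hs hc
  rw [mul_add 2 a₁, sin_add, cos_add]
  have hp₁ := sin_sq_add_cos_sq (2 * a₁)
  have hp₂ := sin_sq_add_cos_sq (2 * a₂)
  field_simp
  linear_combination (q₁ ^ 2 * sin (2 * a₂) ^ 2 * hp₁ + q₃ ^ 2 * sin (2 * a₁) ^ 2 * hp₂ +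
    (c * (sin (2 * a₁) * cos (2 * a₂) + cos (2 * a₁) * sin (2 * a₂)) -
      (q₁ * sin (2 * a₂) + q₃ * sin (2 * a₁))) * hc)

theorem stmt_18 (a₁ a₂ : ℝ) (h₁ : 0 < a₁) (h₂ : 0 < a₂) (h : a₁ + a₂ < Real.pi / 2)
    (S : ℝ → ℝ → ℝ → ℝ)
    (hS : ∀ a x y, S a x y =
      Real.cos (2 * a) / (2 * Real.sin (2 * a)) * (x ^ 2 + y ^ 2)
        - x * y / Real.sin (2 * a))
    (q₁ q₃ : ℝ) :
    (∃! c : ℝ, deriv (fun q₂ => S a₁ q₁ q₂ + S a₂ q₂ q₃) c = 0) ∧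
    (∀ c : ℝ, deriv (fun q₂ => S a₁ q₁ q₂ + S a₂ q₂ q₃) c = 0 →
      S a₁ q₁ c + S a₂ c q₃ = S (a₁ + a₂) q₁ q₃) := by
  obtain rfl : S = rotGenFun := funext fun a => funext fun x => funext fun y => hS a x y
  have sin_two_mul_pos {a : ℝ} (ha : 0 < a) (ha' : a < π / 2) : 0 < sin (2 * a) :=
    sin_pos_of_pos_of_lt_pi (by linarith) (by linarith)
  have hs₁ := sin_two_mul_pos h₁ (by linarith)
  have hs₂ := sin_two_mul_pos h₂ (by linarith)
  have hs := sin_two_mul_pos (add_pos h₁ h₂) h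
  have critical_iff := deriv_rotGenFun_add_eq_zero_iff hs₁.ne' hs₂.ne' q₁ q₃
  refine ⟨⟨(q₁ * sin (2 * a₂) + q₃ * sin (2 * a₁)) / sin (2 * (a₁ + a₂)), ?_, ?_⟩, ?_⟩
  · exact (critical_iff _).mpr (div_mul_cancel₀ _ hs.ne')
  · exact fun c hc => eq_div_of_mul_eq hs.ne' ((critical_iff c).mp hc)
  · exact fun c hc => rotGenFun_add_of_critical hs₁.ne' hs₂.ne' hs.ne' ((critical_iff c).mp hc)
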